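/- Let a : [0,1] → ℝ be weakly or strongly degenerate at 0. Let u ∈ H²_{1/a}(0,1) be four times (weakly) differentiable on (0,1] with ∫₀¹ a(x) u''''(x)² dx < ∞ (i.e. u belongs to the domain D(A) of the operator Au := a u''''), and let v ∈ H²_{1/a}(0,1). Then ∫₀¹ u''''(x) v(x) dx = ∫₀¹ u''(x) v''(x) dx. -/

import Mathlib

open MeasureTheory Set Filter Topology

noncomputable section

/-- The set of quotients `x |a'(x)| / a(x)` for `x ∈ (0,1]`, whose supremum is the
degeneracy constant `K`. -/
def DegenSet (a a' : ℝ → ℝ) : Set ℝ :=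
  {r : ℝ | ∃ x ∈ Set.Ioc (0:ℝ) 1, r = x * |a' x| / a x}

/-- `a` is weakly degenerate at `0` with constant `K`: `a ∈ C[0,1] ∩ C¹(0,1]`, `a(0) = 0`,
`a > 0` on `(0,1]`, and `K = sup_{x ∈ (0,1]} x|a'(x)|/a(x) ∈ (0,1)`. -/
def WeaklyDegenerate (a a' : ℝ → ℝ) (K : ℝ) : Prop :=
  ContinuousOn a (Set.Icc 0 1) ∧
  (∀ x ∈ Set.Ioc (0:ℝ) 1, HasDerivWithinAt a (a' x) (Set.Icc 0 1) x) ∧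
  ContinuousOn a' (Set.Ioc 0 1) ∧
  a 0 = 0 ∧ (∀ x ∈ Set.Ioc (0:ℝ) 1, 0 < a x) ∧
  K = sSup (DegenSet a a') ∧ 0 < K ∧ K < 1

/-- `a` is strongly degenerate at `0` with constant `K`: `a ∈ C¹[0,1]`, `a(0) = 0`,
`a > 0` on `(0,1]`, and `K = sup_{x ∈ (0,1]} x|a'(x)|/a(x) ∈ [1,2)`. -/
def StronglyDegenerate (a a' : ℝ → ℝ) (K : ℝ) : Prop :=
  (∀ x ∈ Set.Icc (0:ℝ) 1, HasDerivWithinAt a (a' x) (Set.Icc 0 1) x) ∧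
  ContinuousOn a' (Set.Icc 0 1) ∧
  a 0 = 0 ∧ (∀ x ∈ Set.Ioc (0:ℝ) 1, 0 < a x) ∧
  K = sSup (DegenSet a a') ∧ 1 ≤ K ∧ K < 2

/-- `a` is weakly or strongly degenerate at `0` with constant `K`. -/
def Degenerate (a a' : ℝ → ℝ) (K : ℝ) : Prop :=
  WeaklyDegenerate a a' K ∨ StronglyDegenerate a a' K

/-- `u ∈ H²_{1/a}(0,1)`: `u, u'` are absolutely continuous on `[0,1]` with `u'' ∈ L²(0,1)`,
`u(0) = u(1) = u'(0) = u'(1) = 0`, and `∫₀¹ u²/a < ∞`. -/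
def MemH2w (a u u' u'' : ℝ → ℝ) : Prop :=
  IntervalIntegrable u'' MeasureTheory.volume 0 1 ∧
  MeasureTheory.IntegrableOn (fun x => u'' x ^ 2) (Set.Ioc 0 1) ∧
  (∀ x ∈ Set.Icc (0:ℝ) 1, u' x = u' 0 + ∫ s in (0:ℝ)..x, u'' s) ∧
  (∀ x ∈ Set.Icc (0:ℝ) 1, u x = u 0 + ∫ s in (0:ℝ)..x, u' s) ∧
  u 0 = 0 ∧ u 1 = 0 ∧ u' 0 = 0 ∧ u' 1 = 0 ∧
  MeasureTheory.IntegrableOn (fun x => u x ^ 2 / a x) (Set.Ioc 0 1)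



lemma amgm (A p q : ℝ) (hA : 0 < A) : |p * q| ≤ (A * p^2 + q^2/A)/2 := by
  have hq : q^2/A*A = q^2 := div_mul_cancel₀ _ hA.ne'
  rcases abs_cases (p*q) with ⟨h1, _⟩ | ⟨h1, _⟩ <;> rw [h1] <;>
    nlinarith [sq_nonneg (A*p - q), sq_nonneg (A*p + q), hA, sq_nonneg p, sq_nonneg q]


lemma degen_core (a a' : ℝ → ℝ) (K : ℝ)
    (hc : ContinuousOn a (Set.Icc 0 1))
    (hd : ∀ x ∈ Set.Ioc (0:ℝ) 1, HasDerivWithinAt a (a' x) (Set.Icc 0 1) x)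
    (hpos : ∀ x ∈ Set.Ioc (0:ℝ) 1, 0 < a x)
    (hKs : K = sSup (DegenSet a a')) (hK0 : 0 < K) (hK2 : K < 2) :
    ContinuousOn a (Set.Icc 0 1) ∧ (∀ x ∈ Set.Ioc (0:ℝ) 1, 0 < a x) ∧ 0 < K ∧ K < 2 ∧
    ∀ x ∈ Set.Ioc (0:ℝ) 1, a 1 * x ^ K ≤ a x := by
  refine ⟨hc, hpos, hK0, hK2, ?_⟩
  have bdd : BddAbove (DegenSet a a') := by
    by_contra hb
    rw [csSup_of_not_bddAbove hb, Real.sSup_empty] at hKs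
    exact absurd hKs hK0.ne'
  have hratio : ∀ x ∈ Set.Ioc (0:ℝ) 1, |a' x| / a x ≤ K * x⁻¹ := by
    intro x hx
    have h1 : x * |a' x| / a x ≤ K := hKs ▸ le_csSup bdd ⟨x, hx, rfl⟩
    have hax := hpos x hx
    rw [div_le_iff₀ hax] at h1
    have h2 : |a' x| ≤ K * a x / x := by
      rw [le_div_iff₀ hx.1, mul_comm]; exact h1
    have h3 : |a' x| / a x ≤ (K * a x / x) / a x := by gcongr
    have h4 : (K * a x / x) / a x = K * x⁻¹ := by
      rw [div_div, mul_comm x (a x), ← div_div, mul_div_assoc, div_self hax.ne', mul_one,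
        div_eq_mul_inv]
    linarith
  set ψ : ℝ → ℝ := fun x => Real.log (a x) - K * Real.log x with hψ
  have key : ∀ x ∈ Set.Ioc (0:ℝ) 1, ψ 1 ≤ ψ x := by
    intro x hx
    rcases eq_or_lt_of_le hx.2 with heq | hlt
    · rw [heq]
    have hsub : Set.Icc x 1 ⊆ Set.Ioc (0:ℝ) 1 := fun y hy => ⟨lt_of_lt_of_le hx.1 hy.1, hy.2⟩
    have hder : ∀ y ∈ Set.Ioo x 1, HasDerivAt ψ (a' y / a y - K * y⁻¹) y := by
      intro y hy
      have hy' : y ∈ Set.Ioc (0:ℝ) 1 := hsub ⟨hy.1.le, hy.2.le⟩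
      have hay : HasDerivAt a (a' y) y :=
        (hd y hy').hasDerivAt (Icc_mem_nhds hy'.1 hy.2)
      exact (hay.log (hpos y hy').ne').sub ((Real.hasDerivAt_log hy'.1.ne').const_mul K)
    have hanti : AntitoneOn ψ (Set.Icc x 1) := by
      apply antitoneOn_of_deriv_nonpos (convex_Icc x 1)
      · apply ContinuousOn.sub
        · exact ((hc.mono (fun y hy => ⟨(hsub hy).1.le, hy.2⟩)).log
            (fun y hy => (hpos y (hsub hy)).ne'))
        · exact (continuousOn_id.log (fun y hy => (hsub hy).1.ne')).const_smul K
      · intro y hy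
        rw [interior_Icc] at hy
        exact (hder y hy).differentiableAt.differentiableWithinAt
      · intro y hy
        rw [interior_Icc] at hy
        rw [(hder y hy).deriv]
        have hy' : y ∈ Set.Ioc (0:ℝ) 1 := ⟨hx.1.trans hy.1, hy.2.le⟩
        have h2 : a' y / a y ≤ |a' y| / a y := by
          gcongr
          · exact (hpos y hy').le
          · exact le_abs_self _
        have h3 := hratio y hy'
        linarith
    exact hanti ⟨le_refl x, hx.2⟩ ⟨hx.2, le_refl 1⟩ hx.2
  intro x hx
  have h1 := key x hx
  have ha1 : 0 < a 1 := hpos 1 ⟨one_pos, le_refl 1⟩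
  have hxK : (0:ℝ) < x ^ K := Real.rpow_pos_of_pos hx.1 K
  have hlog : Real.log (a 1 * x ^ K) ≤ Real.log (a x) := by
    rw [Real.log_mul ha1.ne' hxK.ne', Real.log_rpow hx.1]
    simp only [hψ, Real.log_one] at h1
    linarith
  have := Real.exp_le_exp.mpr hlog
  rwa [Real.exp_log (by positivity), Real.exp_log (hpos x hx)] at this

lemma degen_facts (a a' : ℝ → ℝ) (K : ℝ) (h : Degenerate a a' K) :
    ContinuousOn a (Set.Icc 0 1) ∧ (∀ x ∈ Set.Ioc (0:ℝ) 1, 0 < a x) ∧ 0 < K ∧ K < 2 ∧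
    ∀ x ∈ Set.Ioc (0:ℝ) 1, a 1 * x ^ K ≤ a x := by
  obtain ⟨hc, hd, -, -, hpos, hKs, hK0, hK2⟩ | ⟨hd', -, -, hpos, hKs, hK1, hK2⟩ := h
  · exact degen_core a a' K hc hd hpos hKs hK0 (hK2.trans one_lt_two)
  · have hc : ContinuousOn a (Set.Icc 0 1) := fun x hx => (hd' x hx).continuousWithinAt
    have hd : ∀ x ∈ Set.Ioc (0:ℝ) 1, HasDerivWithinAt a (a' x) (Set.Icc 0 1) x :=
      fun x hx => hd' x ⟨hx.1.le, hx.2⟩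
    exact degen_core a a' K hc hd hpos hKs (lt_of_lt_of_le one_pos hK1) hK2


lemma my_swap (c d : ℝ) (f g : ℝ → ℝ) (W : ℝ → ℝ → ℝ)
    (hf : IntegrableOn f (Set.Ioc c d)) (hg : IntegrableOn g (Set.Ioc c d))
    (hW : AEStronglyMeasurable (fun p : ℝ × ℝ => W p.1 p.2)
        ((volume.restrict (Set.Ioc c d)).prod (volume.restrict (Set.Ioc c d))))
    (hWb : ∀ t ∈ Set.Ioc c d, ∀ s ∈ Set.Ioc c d, |W t s| ≤ 1) :
    ∫ t in Set.Ioc c d, ∫ s in Set.Ioc c d, f t * (g s * W t s) =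
    ∫ s in Set.Ioc c d, ∫ t in Set.Ioc c d, f t * (g s * W t s) := by
  set μ := volume.restrict (Set.Ioc c d) with hμ
  have hint : Integrable (Function.uncurry fun t s => f t * (g s * W t s)) (μ.prod μ) := by
    have hasm : AEStronglyMeasurable (Function.uncurry fun t s => f t * (g s * W t s))
        (μ.prod μ) :=
      (hf.aestronglyMeasurable.comp_fst).mul ((hg.aestronglyMeasurable.comp_snd).mul hW)
    have hbd : Integrable (fun p : ℝ × ℝ => |f p.1| * |g p.2|) (μ.prod μ) :=
      hf.abs.mul_prod hg.abs
    apply hbd.mono' hasm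
    have hset : ∀ᵐ p : ℝ × ℝ ∂μ.prod μ, p ∈ Set.Ioc c d ×ˢ Set.Ioc c d := by
      rw [hμ, Measure.prod_restrict]
      exact ae_restrict_mem (measurableSet_Ioc.prod measurableSet_Ioc)
    filter_upwards [hset] with p hp
    obtain ⟨hp1, hp2⟩ := hp
    have h1 := hWb p.1 hp1 p.2 hp2
    simp only [Function.uncurry, Real.norm_eq_abs, abs_mul]
    calc |f p.1| * (|g p.2| * |W p.1 p.2|) ≤ |f p.1| * (|g p.2| * 1) := by gcongr
    _ = |f p.1| * |g p.2| := by ring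
  exact integral_integral_swap hint
lemma memH2w_cont (a w w' w'' : ℝ → ℝ) (hw : MemH2w a w w' w'') :
    ContinuousOn w' (Set.Icc 0 1) ∧ ContinuousOn w (Set.Icc 0 1) := by
  have h1 : ContinuousOn w' (Set.Icc 0 1) := by
    have : ContinuousOn (fun x => w' 0 + ∫ s in (0:ℝ)..x, w'' s) (Set.Icc 0 1) := by
      apply continuousOn_const.add
      have := intervalIntegral.continuousOn_primitive_interval
        (a := (0:ℝ)) (b := 1) (f := w'') (μ := volume) ?_
      · simpa [Set.uIcc_of_le (zero_le_one' ℝ)] using this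
      · rw [Set.uIcc_of_le (zero_le_one' ℝ), integrableOn_Icc_iff_integrableOn_Ioc]
        exact hw.1.1
    exact this.congr (fun x hx => hw.2.2.1 x hx)
  refine ⟨h1, ?_⟩
  have : ContinuousOn (fun x => w 0 + ∫ s in (0:ℝ)..x, w' s) (Set.Icc 0 1) := by
    apply continuousOn_const.add
    have := intervalIntegral.continuousOn_primitive_interval
      (a := (0:ℝ)) (b := 1) (f := w') (μ := volume) ?_
    · simpa [Set.uIcc_of_le (zero_le_one' ℝ)] using this
    · rw [Set.uIcc_of_le (zero_le_one' ℝ)]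
      exact h1.integrableOn_Icc
  exact this.congr (fun x hx => hw.2.2.2.1 x hx)

lemma taylor_formula (a w w' w'' : ℝ → ℝ) (hw : MemH2w a w w' w'') (x : ℝ)
    (hx : x ∈ Set.Ioc (0:ℝ) 1) :
    ∫ s in Set.Ioc 0 x, w'' s * (x - s) = w x := by
  have hw''I : IntegrableOn w'' (Set.Ioc 0 1) := hw.1.1
  have hw'repr := hw.2.2.1
  have hwrepr := hw.2.2.2.1
  have hw0 : w 0 = 0 := hw.2.2.2.2.1
  have hw'0 : w' 0 = 0 := hw.2.2.2.2.2.2.1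
  have hw'c : ContinuousOn w' (Set.Icc 0 1) := (memH2w_cont a w w' w'' hw).1
  have hxI : x ∈ Set.Icc (0:ℝ) 1 := ⟨hx.1.le, hx.2⟩
  set W : ℝ → ℝ → ℝ := fun t s => if s ≤ t then 1 else 0 with hW
  have hsub : Set.Ioc 0 x ⊆ Set.Ioc (0:ℝ) 1 := Set.Ioc_subset_Ioc_right hx.2
  have hone : IntegrableOn (fun _ : ℝ => (1:ℝ)) (Set.Ioc 0 x) :=
    integrableOn_const measure_Ioc_lt_top.ne
  have hWm : AEStronglyMeasurable (fun p : ℝ × ℝ => W p.1 p.2)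
      ((volume.restrict (Set.Ioc 0 x)).prod (volume.restrict (Set.Ioc 0 x))) := by
    apply Measurable.aestronglyMeasurable
    exact Measurable.ite (measurableSet_le measurable_snd measurable_fst)
      measurable_const measurable_const
  have hWb : ∀ t ∈ Set.Ioc (0:ℝ) x, ∀ s ∈ Set.Ioc (0:ℝ) x, |W t s| ≤ 1 := by
    intro t _ s _
    by_cases h : s ≤ t <;> simp [hW, h]
  have hswap := my_swap 0 x (fun _ => (1:ℝ)) w'' W hone (hw''I.mono_set hsub) hWm hWb
  -- left side computation
  have hL : ∀ t ∈ Set.Ioc (0:ℝ) x, (∫ s in Set.Ioc 0 x, (1:ℝ) * (w'' s * W t s)) = w' t := by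
    intro t ht
    have h1 : (∫ s in Set.Ioc 0 x, (1:ℝ) * (w'' s * W t s)) =
        ∫ s in Set.Ioc 0 x, (Set.Iic t).indicator w'' s := by
      apply setIntegral_congr_fun measurableSet_Ioc
      intro s _
      by_cases h : s ≤ t <;> simp [hW, h, Set.indicator_apply, Set.mem_Iic]
    rw [h1, integral_indicator measurableSet_Iic, Measure.restrict_restrict measurableSet_Iic]
    have h2 : Set.Iic t ∩ Set.Ioc 0 x = Set.Ioc 0 t := by
      ext s
      simp only [Set.mem_inter_iff, Set.mem_Iic, Set.mem_Ioc]
      exact ⟨fun ⟨a1, a2, _⟩ => ⟨a2, a1⟩, fun ⟨a1, a2⟩ => ⟨a2, a1, a2.trans ht.2⟩⟩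
    rw [h2, ← intervalIntegral.integral_of_le ht.1.le]
    have := hw'repr t ⟨ht.1.le, ht.2.trans hx.2⟩
    rw [this, hw'0]; ring
  -- right side computation
  have hR : ∀ s ∈ Set.Ioc (0:ℝ) x, (∫ t in Set.Ioc 0 x, (1:ℝ) * (w'' s * W t s)) =
      w'' s * (x - s) := by
    intro s hs
    simp only [one_mul]
    rw [MeasureTheory.integral_const_mul]
    congr 1
    have h1 : (∫ t in Set.Ioc 0 x, W t s) = ∫ t in Set.Ioc 0 x,
        (Set.Ici s).indicator (fun _ => (1:ℝ)) t := by
      apply setIntegral_congr_fun measurableSet_Ioc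
      intro t _
      by_cases h : s ≤ t <;> simp [hW, h, Set.indicator_apply, Set.mem_Ici]
    rw [h1, integral_indicator measurableSet_Ici, Measure.restrict_restrict measurableSet_Ici]
    have h2 : Set.Ici s ∩ Set.Ioc 0 x = Set.Icc s x := by
      ext t
      simp only [Set.mem_inter_iff, Set.mem_Ici, Set.mem_Ioc, Set.mem_Icc]
      exact ⟨fun ⟨a1, _, a3⟩ => ⟨a1, a3⟩, fun ⟨a1, a2⟩ => ⟨a1, hs.1.trans_le a1, a2⟩⟩
    rw [h2]
    simp [Real.volume_Icc, ENNReal.toReal_ofReal (sub_nonneg.mpr hs.2), hs.2]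
  calc (∫ s in Set.Ioc 0 x, w'' s * (x - s))
      = ∫ s in Set.Ioc 0 x, ∫ t in Set.Ioc 0 x, (1:ℝ) * (w'' s * W t s) :=
        (setIntegral_congr_fun measurableSet_Ioc hR).symm
    _ = ∫ t in Set.Ioc 0 x, ∫ s in Set.Ioc 0 x, (1:ℝ) * (w'' s * W t s) := hswap.symm
    _ = ∫ t in Set.Ioc 0 x, w' t := setIntegral_congr_fun measurableSet_Ioc hL
    _ = w x := by
        have := hwrepr x hxI
        rw [hw0, zero_add] at this
        rw [← intervalIntegral.integral_of_le hx.1.le, this]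

/-- Integration by parts formula: if `a` is weakly or strongly degenerate at `0`,
`u ∈ D(A)` (i.e. `u ∈ H²_{1/a}(0,1)` is four times differentiable on `(0,1]` with
`∫₀¹ a (u'''')² < ∞`) and `v ∈ H²_{1/a}(0,1)`, then
`∫₀¹ u'''' v = ∫₀¹ u'' v''` (both sides being well defined). -/
theorem integral_fourth_deriv_mul_eq (a a' : ℝ → ℝ) (K : ℝ) (h : Degenerate a a' K)
    (u u' u'' u''' u'''' : ℝ → ℝ)
    (hu : MemH2w a u u' u'')
    (hu3 : ∀ x ∈ Set.Ioc (0:ℝ) 1, HasDerivWithinAt u'' (u''' x) (Set.Ioc 0 1) x)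
    (hu4 : ∀ x ∈ Set.Ioc (0:ℝ) 1, HasDerivWithinAt u''' (u'''' x) (Set.Ioc 0 1) x)
    (hDA : MeasureTheory.IntegrableOn (fun x => a x * u'''' x ^ 2) (Set.Ioc 0 1))
    (v v' v'' : ℝ → ℝ) (hv : MemH2w a v v' v'') :
    MeasureTheory.IntegrableOn (fun x => u'''' x * v x) (Set.Ioc 0 1) ∧
    (∫ x in Set.Ioc (0:ℝ) 1, u'''' x * v x) = ∫ x in Set.Ioc (0:ℝ) 1, u'' x * v'' x := by
  obtain ⟨hcA, hpos, hK0, hK2, hlow⟩ := degen_facts a a' K h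
  have ha1 : 0 < a 1 := hpos 1 ⟨one_pos, le_refl 1⟩
  have hu''c : ContinuousOn u'' (Set.Ioc 0 1) := fun x hx => (hu3 x hx).continuousWithinAt
  have hu'''c : ContinuousOn u''' (Set.Ioc 0 1) := fun x hx => (hu4 x hx).continuousWithinAt
  have hvc : ContinuousOn v (Set.Icc 0 1) := (memH2w_cont a v v' v'' hv).2
  have hv''I : IntegrableOn v'' (Set.Ioc 0 1) := hv.1.1
  set U := deriv u''' with hUdef
  have hUeq : ∀ x ∈ Set.Ioo (0:ℝ) 1, HasDerivAt u''' (U x) x ∧ U x = u'''' x := by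
    intro x hx
    have h4 : HasDerivAt u''' (u'''' x) x :=
      (hu4 x ⟨hx.1, hx.2.le⟩).hasDerivAt (Ioc_mem_nhds hx.1 hx.2)
    refine ⟨?_, h4.deriv⟩
    rw [show U x = u'''' x from h4.deriv]
    exact h4
  have hIO : ∀ᵐ x ∂(volume.restrict (Set.Ioc (0:ℝ) 1)), x ∈ Set.Ioo (0:ℝ) 1 := by
    have hmem := ae_restrict_mem (μ := volume) measurableSet_Ioc (s := Set.Ioc (0:ℝ) 1)
    have hne : ∀ᵐ (x : ℝ) ∂(volume.restrict (Set.Ioc (0:ℝ) 1)), x ≠ 1 := by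
      refine ae_restrict_of_ae ?_
      rw [ae_iff]
      have : {x : ℝ | ¬x ≠ 1} = {1} := by ext y; simp
      rw [this]
      exact measure_singleton 1
    filter_upwards [hmem, hne] with x h1 h2
    exact ⟨h1.1, lt_of_le_of_ne h1.2 h2⟩
  have hae : ∀ᵐ x ∂(volume.restrict (Set.Ioc (0:ℝ) 1)), U x = u'''' x := by
    filter_upwards [hIO] with x hx using (hUeq x hx).2
  have hDA' : IntegrableOn (fun x => a x * U x ^ 2) (Set.Ioc 0 1) := by
    apply hDA.congr
    filter_upwards [hae] with x hx
    rw [hx]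
  -- integrability of u'''' * v
  have hUv : IntegrableOn (fun x => U x * v x) (Set.Ioc 0 1) := by
    have hbd : IntegrableOn (fun x => (a x * U x ^ 2 + v x ^ 2 / a x) / 2) (Set.Ioc 0 1) :=
      (hDA'.add hv.2.2.2.2.2.2.2.2).div_const 2
    apply hbd.mono'
    · exact ((measurable_deriv u''').aestronglyMeasurable.restrict).mul
        ((hvc.mono Set.Ioc_subset_Icc_self).aestronglyMeasurable measurableSet_Ioc)
    · filter_upwards [ae_restrict_mem measurableSet_Ioc] with x hx
      rw [Real.norm_eq_abs]
      exact amgm (a x) (U x) (v x) (hpos x hx)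
  have hint1 : IntegrableOn (fun x => u'''' x * v x) (Set.Ioc 0 1) := by
    apply hUv.congr
    filter_upwards [hae] with x hx
    rw [hx]
  refine ⟨hint1, ?_⟩
  -- integrability of U x * x
  have hx2a : ∀ x ∈ Set.Ioc (0:ℝ) 1, x ^ 2 / a x ≤ 1 / a 1 := by
    intro x hx
    have hxK : (0:ℝ) < x ^ K := Real.rpow_pos_of_pos hx.1 K
    have h1 : x ^ 2 / a x ≤ x ^ 2 / (a 1 * x ^ K) :=
      div_le_div_of_nonneg_left (by positivity) (by positivity) (hlow x hx)
    have h2 : x ^ 2 / (a 1 * x ^ K) = x ^ ((2:ℝ) - K) / a 1 := by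
      rw [Real.rpow_sub hx.1, ← Real.rpow_natCast x 2]
      push_cast
      rw [div_div, mul_comm]
    have h3 : x ^ ((2:ℝ) - K) ≤ 1 := Real.rpow_le_one hx.1.le hx.2 (by linarith)
    calc x ^ 2 / a x ≤ x ^ ((2:ℝ) - K) / a 1 := h2 ▸ h1
      _ ≤ 1 / a 1 := by gcongr
  have hfI : IntegrableOn (fun x => U x * x) (Set.Ioc 0 1) := by
    have hbd : IntegrableOn (fun x => (a x * U x ^ 2 + 1 / a 1) / 2) (Set.Ioc 0 1) :=
      (hDA'.add (integrableOn_const measure_Ioc_lt_top.ne)).div_const 2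
    apply hbd.mono'
    · exact ((measurable_deriv u''').mul measurable_id).aestronglyMeasurable.restrict
    · filter_upwards [ae_restrict_mem measurableSet_Ioc] with x hx
      rw [Real.norm_eq_abs]
      calc |U x * x| ≤ (a x * U x ^ 2 + x ^ 2 / a x) / 2 := amgm (a x) (U x) x (hpos x hx)
        _ ≤ (a x * U x ^ 2 + 1 / a 1) / 2 := by
            have := hx2a x hx
            linarith
  -- the kernel W
  set W : ℝ → ℝ → ℝ := fun x s => max (x - s) 0 / x with hWdef
  have hWm : AEStronglyMeasurable (fun p : ℝ × ℝ => W p.1 p.2)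
      ((volume.restrict (Set.Ioc (0:ℝ) 1)).prod (volume.restrict (Set.Ioc (0:ℝ) 1))) :=
    (((measurable_fst.sub measurable_snd).max measurable_const).div
      measurable_fst).aestronglyMeasurable
  have hWb : ∀ x ∈ Set.Ioc (0:ℝ) 1, ∀ s ∈ Set.Ioc (0:ℝ) 1, |W x s| ≤ 1 := by
    intro x hx s hs
    have h0 : 0 ≤ max (x - s) 0 := le_max_right _ _
    have h1 : max (x - s) 0 ≤ x := max_le (by linarith [hs.1]) hx.1.le
    rw [hWdef, abs_of_nonneg (div_nonneg h0 hx.1.le), div_le_one hx.1]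
    exact h1
  have hswap := my_swap 0 1 (fun x => U x * x) v'' W hfI hv''I hWm hWb
  -- left inner
  have hL : ∀ x ∈ Set.Ioc (0:ℝ) 1,
      (∫ s in Set.Ioc (0:ℝ) 1, (U x * x) * (v'' s * W x s)) = U x * v x := by
    intro x hx
    have hx0 : x ≠ 0 := hx.1.ne'
    have e1 : (∫ s in Set.Ioc (0:ℝ) 1, (U x * x) * (v'' s * W x s)) =
        ∫ s in Set.Ioc (0:ℝ) 1, U x * (v'' s * max (x - s) 0) := by
      apply setIntegral_congr_fun measurableSet_Ioc
      intro s _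
      rw [hWdef]
      field_simp
    rw [e1, MeasureTheory.integral_const_mul]
    congr 1
    -- split the integral
    have hsplit : Set.Ioc (0:ℝ) 1 = Set.Ioc 0 x ∪ Set.Ioc x 1 :=
      (Set.Ioc_union_Ioc_eq_Ioc hx.1.le hx.2).symm
    have hintg : IntegrableOn (fun s => v'' s * max (x - s) 0) (Set.Ioc (0:ℝ) 1) := by
      apply hv''I.abs.mono'
      · exact hv''I.aestronglyMeasurable.mul
          (((continuous_const.sub continuous_id).max continuous_const).aestronglyMeasurable)
      · filter_upwards [ae_restrict_mem measurableSet_Ioc] with s hs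
        rw [Real.norm_eq_abs, abs_mul]
        have h0 : |max (x - s) 0| ≤ 1 := by
          rw [abs_of_nonneg (le_max_right _ _)]
          exact max_le (by linarith [hs.1, hx.2]) zero_le_one
        calc |v'' s| * |max (x - s) 0| ≤ |v'' s| * 1 := by gcongr
          _ = |v'' s| := mul_one _
    rw [hsplit, setIntegral_union ((Set.Ioc_disjoint_Ioc_of_le le_rfl)) measurableSet_Ioc
      (hintg.mono_set (hsplit ▸ Set.subset_union_left))
      (hintg.mono_set (hsplit ▸ Set.subset_union_right))]
    have e2 : (∫ s in Set.Ioc x 1, v'' s * max (x - s) 0) = ∫ s in Set.Ioc x 1, (0:ℝ) := by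
      apply setIntegral_congr_fun measurableSet_Ioc
      intro s hs
      show v'' s * max (x - s) 0 = 0
      rw [max_eq_right (by linarith [hs.1]), mul_zero]
    have e3 : (∫ s in Set.Ioc (0:ℝ) x, v'' s * max (x - s) 0) =
        ∫ s in Set.Ioc (0:ℝ) x, v'' s * (x - s) := by
      apply setIntegral_congr_fun measurableSet_Ioc
      intro s hs
      show v'' s * max (x - s) 0 = v'' s * (x - s)
      rw [max_eq_left (by linarith [hs.2])]
    rw [e2, e3, integral_zero, add_zero, taylor_formula a v v' v'' hv x hx]
  -- right inner
  have hR : ∀ s ∈ Set.Ioo (0:ℝ) 1,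
      (∫ x in Set.Ioc (0:ℝ) 1, (U x * x) * (v'' s * W x s)) =
      v'' s * (u'' s + ((1 - s) * u''' 1 - u'' 1)) := by
    intro s hs
    have e1 : (∫ x in Set.Ioc (0:ℝ) 1, (U x * x) * (v'' s * W x s)) =
        ∫ x in Set.Ioc (0:ℝ) 1, v'' s * (U x * max (x - s) 0) := by
      apply setIntegral_congr_fun measurableSet_Ioc
      intro x hx
      show (U x * x) * (v'' s * (max (x - s) 0 / x)) = v'' s * (U x * max (x - s) 0)
      have hx0 : x ≠ 0 := hx.1.ne'
      field_simp
    rw [e1, MeasureTheory.integral_const_mul]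
    congr 1
    have hintg : IntegrableOn (fun x => U x * max (x - s) 0) (Set.Ioc (0:ℝ) 1) := by
      apply hfI.abs.mono'
      · exact ((measurable_deriv u''').mul
          ((measurable_id.sub measurable_const).max measurable_const)).aestronglyMeasurable.restrict
      · filter_upwards [ae_restrict_mem measurableSet_Ioc] with x hx
        rw [Real.norm_eq_abs, abs_mul]
        have h1 : |max (x - s) 0| ≤ |x| := by
          rw [abs_of_nonneg (le_max_right _ _), abs_of_pos hx.1]
          exact max_le (by linarith [hs.1]) hx.1.le
        calc |U x| * |max (x - s) 0| ≤ |U x| * |x| := by gcongr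
          _ = |U x * x| := (abs_mul _ _).symm
    have hsplit : Set.Ioc (0:ℝ) 1 = Set.Ioc 0 s ∪ Set.Ioc s 1 :=
      (Set.Ioc_union_Ioc_eq_Ioc hs.1.le hs.2.le).symm
    rw [hsplit, setIntegral_union (Set.Ioc_disjoint_Ioc_of_le le_rfl) measurableSet_Ioc
      (hintg.mono_set (hsplit ▸ Set.subset_union_left))
      (hintg.mono_set (hsplit ▸ Set.subset_union_right))]
    have e2 : (∫ x in Set.Ioc (0:ℝ) s, U x * max (x - s) 0) = ∫ x in Set.Ioc (0:ℝ) s, (0:ℝ) := by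
      apply setIntegral_congr_fun measurableSet_Ioc
      intro x hx
      show U x * max (x - s) 0 = 0
      rw [max_eq_right (by linarith [hx.2]), mul_zero]
    have e3 : (∫ x in Set.Ioc s 1, U x * max (x - s) 0) =
        ∫ x in Set.Ioc s 1, (x - s) * U x := by
      apply setIntegral_congr_fun measurableSet_Ioc
      intro x hx
      show U x * max (x - s) 0 = (x - s) * U x
      rw [max_eq_left (by linarith [hx.1]), mul_comm]
    rw [e2, e3, integral_zero, zero_add]
    -- FTC on [s,1]
    have hIccsub : Set.Icc s 1 ⊆ Set.Ioc (0:ℝ) 1 := fun y hy => ⟨hs.1.trans_le hy.1, hy.2⟩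
    have hcont : ContinuousOn (fun x => (x - s) * u''' x - u'' x) (Set.Icc s 1) :=
      ((continuousOn_id.sub continuousOn_const).mul (hu'''c.mono hIccsub)).sub
        (hu''c.mono hIccsub)
    have hderiv : ∀ x ∈ Set.Ioo s 1,
        HasDerivAt (fun x => (x - s) * u''' x - u'' x) ((x - s) * U x) x := by
      intro x hx
      have hxI : x ∈ Set.Ioo (0:ℝ) 1 := ⟨hs.1.trans hx.1, hx.2⟩
      have h3 : HasDerivAt u'' (u''' x) x :=
        (hu3 x ⟨hxI.1, hxI.2.le⟩).hasDerivAt (Ioc_mem_nhds hxI.1 hxI.2)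
      have h4 : HasDerivAt u''' (U x) x := (hUeq x hxI).1
      have h5 : HasDerivAt (fun x => (x - s) * u''' x - u'' x) (1 * u''' x + (x - s) * U x - u''' x) x :=
        (((hasDerivAt_id x).sub_const s).mul h4).sub h3
      convert h5 using 1
      ring
    have hginti : IntervalIntegrable (fun x => (x - s) * U x) volume s 1 := by
      rw [intervalIntegrable_iff_integrableOn_Ioc_of_le hs.2.le]
      apply IntegrableOn.congr_fun (hintg.mono_set (Set.Ioc_subset_Ioc_left hs.1.le)) ?_
        measurableSet_Ioc
      intro x hx
      show U x * max (x - s) 0 = (x - s) * U x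
      rw [max_eq_left (by linarith [hx.1]), mul_comm]
    have hftc := intervalIntegral.integral_eq_sub_of_hasDerivAt_of_le hs.2.le hcont hderiv hginti
    rw [← intervalIntegral.integral_of_le hs.2.le, hftc]
    ring
  have hRouter : (∫ s in Set.Ioc (0:ℝ) 1, ∫ x in Set.Ioc (0:ℝ) 1, (U x * x) * (v'' s * W x s)) =
      ∫ s in Set.Ioc (0:ℝ) 1, v'' s * (u'' s + ((1 - s) * u''' 1 - u'' 1)) := by
    apply integral_congr_ae
    filter_upwards [hIO] with s hs
    exact hR s hs
  -- integrability pieces for the final splitting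
  have hsplitint : IntegrableOn (fun s => v'' s * u'' s) (Set.Ioc (0:ℝ) 1) := by
    have hbd : IntegrableOn (fun s => (v'' s ^ 2 + u'' s ^ 2) / 2) (Set.Ioc (0:ℝ) 1) :=
      (hv.2.1.add hu.2.1).div_const 2
    apply hbd.mono'
    · exact hv''I.aestronglyMeasurable.mul (hu''c.aestronglyMeasurable measurableSet_Ioc)
    · filter_upwards [ae_restrict_mem measurableSet_Ioc] with s _
      rw [Real.norm_eq_abs]
      have := amgm 1 (v'' s) (u'' s) one_pos
      simpa using this
  have hlinint : IntegrableOn (fun s => v'' s * (1 - s)) (Set.Ioc (0:ℝ) 1) := by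
    apply hv''I.abs.mono'
    · exact hv''I.aestronglyMeasurable.mul
        (continuous_const.sub continuous_id).aestronglyMeasurable
    · filter_upwards [ae_restrict_mem measurableSet_Ioc] with s hs
      rw [Real.norm_eq_abs, abs_mul]
      have h1 : |1 - s| ≤ 1 := by
        rw [abs_of_nonneg (by linarith [hs.2])]
        linarith [hs.1]
      calc |v'' s| * |1 - s| ≤ |v'' s| * 1 := by gcongr
        _ = |v'' s| := mul_one _
  have hconst : IntegrableOn (fun s => v'' s * ((1 - s) * u''' 1 - u'' 1)) (Set.Ioc (0:ℝ) 1) := by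
    apply IntegrableOn.congr_fun ((hlinint.const_mul (u''' 1)).sub (hv''I.const_mul (u'' 1))) ?_
      measurableSet_Ioc
    intro s _
    show u''' 1 * (v'' s * (1 - s)) - u'' 1 * v'' s = v'' s * ((1 - s) * u''' 1 - u'' 1)
    ring
  -- the two vanishing integrals
  have hv''zero : (∫ s in Set.Ioc (0:ℝ) 1, v'' s) = 0 := by
    have h1 := hv.2.2.1 1 ⟨zero_le_one, le_refl 1⟩
    rw [hv.2.2.2.2.2.2.1, hv.2.2.2.2.2.2.2.1, zero_add] at h1
    rw [← intervalIntegral.integral_of_le zero_le_one]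
    exact h1.symm
  have hv''lin : (∫ s in Set.Ioc (0:ℝ) 1, v'' s * (1 - s)) = 0 := by
    have h1 := taylor_formula a v v' v'' hv 1 ⟨one_pos, le_refl 1⟩
    rw [hv.2.2.2.2.2.1] at h1
    exact h1
  -- assemble
  calc (∫ x in Set.Ioc (0:ℝ) 1, u'''' x * v x)
      = ∫ x in Set.Ioc (0:ℝ) 1, U x * v x := by
        apply integral_congr_ae
        filter_upwards [hae] with x hx
        rw [hx]
    _ = ∫ x in Set.Ioc (0:ℝ) 1, ∫ s in Set.Ioc (0:ℝ) 1, (U x * x) * (v'' s * W x s) :=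
        (setIntegral_congr_fun measurableSet_Ioc (fun x hx => hL x hx)).symm
    _ = ∫ s in Set.Ioc (0:ℝ) 1, ∫ x in Set.Ioc (0:ℝ) 1, (U x * x) * (v'' s * W x s) := hswap
    _ = ∫ s in Set.Ioc (0:ℝ) 1, v'' s * (u'' s + ((1 - s) * u''' 1 - u'' 1)) := hRouter
    _ = ∫ s in Set.Ioc (0:ℝ) 1,
          (v'' s * u'' s + v'' s * ((1 - s) * u''' 1 - u'' 1)) := by
        apply integral_congr_ae
        exact Eventually.of_forall (fun s => by ring)
    _ = (∫ s in Set.Ioc (0:ℝ) 1, v'' s * u'' s) +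
          ∫ s in Set.Ioc (0:ℝ) 1, v'' s * ((1 - s) * u''' 1 - u'' 1) :=
        integral_add hsplitint hconst
    _ = ∫ x in Set.Ioc (0:ℝ) 1, u'' x * v'' x := by
        have h5 : (∫ s in Set.Ioc (0:ℝ) 1, v'' s * ((1 - s) * u''' 1 - u'' 1)) =
            u''' 1 * (∫ s in Set.Ioc (0:ℝ) 1, v'' s * (1 - s)) -
              u'' 1 * ∫ s in Set.Ioc (0:ℝ) 1, v'' s := by
          rw [← MeasureTheory.integral_const_mul, ← MeasureTheory.integral_const_mul,
            ← integral_sub (hlinint.const_mul (u''' 1)) (hv''I.const_mul (u'' 1))]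
          apply integral_congr_ae
          exact Eventually.of_forall (fun s => by ring)
        rw [h5, hv''zero, hv''lin]
        rw [mul_zero, mul_zero, sub_zero, add_zero]
        apply integral_congr_ae
        exact Eventually.of_forall (fun s => mul_comm _ _)
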